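/- arXiv:0908.3528 — 7 statements merged into one kernel-verified Lean document; each statement's English description precedes it below -/
import Mathlib

section
/- For n ≥ 2 and any integer k > n+1, if X_1,...,X_n are independent nonnegative-integer-valued random variables each with mean 1, and some X_m satisfies P(X_m = k) > 0, then there exists another choice of distribution for X_m (nonnegative-integer-valued with mean 1) that strictly decreases P(X_1 + ... + X_n ≤ n). In particular, any distribution minimizing P(∑X_i ≤ n) puts no mass on values greater than n+1. -/
/-- `p` is the mass function of a nonnegative-integer-valued random variable with mean 1. -/
def IsDist (p : ℕ → ℝ) : Prop :=
  (∀ j, 0 ≤ p j) ∧ HasSum p 1 ∧ HasSum (fun j : ℕ => (j : ℝ) * p j) 1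

/-- Probability that the sum of `n` independent variables with mass functions `p i` is ≤ n. -/
noncomputable def probLe (n : ℕ) (p : Fin n → ℕ → ℝ) : ℝ :=
  ∑ f ∈ Finset.univ.filter (fun f : Fin n → Fin (n + 1) => (∑ i, (f i : ℕ)) ≤ n),
    ∏ i, p i (f i)

/-!
Replacing the mass `c` that the `m`-th distribution puts at `k > n + 1` by mass `k c / (n + 1)` at
`n + 1`, and compensating at `0`, keeps it a distribution with mean one, since `k c / (n + 1)` is the
amount at `n + 1` carrying the same mean as `c` at `k`. The new distribution agrees with the old one
on `1, …, n` and has strictly less mass at `0`, while the values above `n` are irrelevant for the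
event `X₁ + ⋯ + Xₙ ≤ n`. Hence `P(X₁ + ⋯ + Xₙ ≤ n)` drops by the removed mass at `0` times
`P(∑_{i ≠ m} Xᵢ ≤ n)`, which is positive because a variable of mean one charges `0` or `1`.
-/

namespace IsDist

variable {p : ℕ → ℝ}

lemma hasSum_natCast_mul_succ (hp : IsDist p) :
    HasSum (fun j : ℕ => (j : ℝ) * p (j + 1)) (p 0) := by
  have h := (hasSum_nat_add_iff' 1).2 (hp.2.2.sub hp.2.1)
  simpa [add_mul] using h

lemma natCast_sub_one_mul_le (hp : IsDist p) {k : ℕ} (hk : 1 ≤ k) :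
    ((k : ℝ) - 1) * p k ≤ p 0 := by
  have h := le_hasSum hp.hasSum_natCast_mul_succ (k - 1)
    (fun j _ => mul_nonneg (Nat.cast_nonneg j) (hp.1 _))
  rwa [Nat.sub_add_cancel hk, Nat.cast_sub hk, Nat.cast_one] at h

/-- A variable with values in `{2, 3, …}` would have mean at least `2`. -/
lemma pos_zero_or_pos_one (hp : IsDist p) : 0 < p 0 ∨ 0 < p 1 := by
  by_contra! h
  have h0 : p 0 = 0 := le_antisymm h.1 (hp.1 0)
  have h1 : p 1 = 0 := le_antisymm h.2 (hp.1 1)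
  have hle : ∀ j, 2 * p j ≤ (j : ℝ) * p j := by
    rintro (_ | _ | j)
    · simp [h0]
    · simp [h1]
    · exact mul_le_mul_of_nonneg_right (by push_cast; linarith [j.cast_nonneg (α := ℝ)]) (hp.1 _)
  linarith [hasSum_le hle (hp.2.1.mul_left 2) hp.2.2]

end IsDist

noncomputable def moveMass (p : ℕ → ℝ) (N k : ℕ) : ℕ → ℝ :=
  p + Pi.single N ((k / N : ℝ) * p k) - Pi.single k (p k) - Pi.single 0 ((k / N - 1 : ℝ) * p k)

lemma hasSum_natCast_mul_single (b : ℕ) (a : ℝ) :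
    HasSum (fun j : ℕ => (j : ℝ) * (Pi.single b a : ℕ → ℝ) j) (b * a) := by
  convert hasSum_pi_single b ((b : ℝ) * a) using 1
  funext j
  rcases eq_or_ne j b with rfl | h
  · simp
  · simp [h]

section moveMass

variable {p : ℕ → ℝ} {N k : ℕ}

lemma moveMass_apply_of_ne {j : ℕ} (hj0 : j ≠ 0) (hjN : j ≠ N) (hjk : j ≠ k) :
    moveMass p N k j = p j := by
  simp [moveMass, hj0, hjN, hjk]

lemma moveMass_apply_zero (hN : 0 < N) (hNk : N < k) :
    moveMass p N k 0 = p 0 - (k / N - 1 : ℝ) * p k := by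
  simp [moveMass, hN.ne, (hN.trans hNk).ne]

lemma IsDist.moveMass (hp : IsDist p) (hN : 0 < N) (hNk : N < k) : IsDist (moveMass p N k) := by
  have hN' : (N : ℝ) ≠ 0 := by positivity
  refine ⟨fun j => ?_, ?_, ?_⟩
  · rcases eq_or_ne j 0 with rfl | hj0
    · rw [moveMass_apply_zero hN hNk]
      have hkN : (k / N : ℝ) ≤ k := div_le_self k.cast_nonneg (by exact_mod_cast hN)
      nlinarith [hp.natCast_sub_one_mul_le (k := k) (by omega), hp.1 k]
    rcases eq_or_ne j N with rfl | hjN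
    · simp only [_root_.moveMass, Pi.add_apply, Pi.sub_apply, Pi.single_eq_same,
        Pi.single_apply, hNk.ne, hj0, if_false, sub_zero]
      exact add_nonneg (hp.1 _) (mul_nonneg (by positivity) (hp.1 k))
    rcases eq_or_ne j k with rfl | hjk
    · simp [_root_.moveMass, hj0, hjN.symm]
    · rw [moveMass_apply_of_ne hj0 hjN hjk]
      exact hp.1 j
  · have h := ((hp.2.1.add (hasSum_pi_single N ((k / N : ℝ) * p k))).sub
      (hasSum_pi_single k (p k))).sub (hasSum_pi_single 0 ((k / N - 1 : ℝ) * p k))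
    rwa [show 1 + (k / N : ℝ) * p k - p k - (k / N - 1) * p k = 1 by ring] at h
  · have h := ((hp.2.2.add (hasSum_natCast_mul_single N ((k / N : ℝ) * p k))).sub
      (hasSum_natCast_mul_single k (p k))).sub
      (hasSum_natCast_mul_single 0 ((k / N - 1 : ℝ) * p k))
    rw [show 1 + (N : ℝ) * ((k / N) * p k) - k * p k - (0 : ℕ) * ((k / N - 1) * p k) = 1 by
      field_simp; ring] at h
    refine h.congr_fun fun j => ?_
    simp only [_root_.moveMass, Pi.add_apply, Pi.sub_apply]
    ring

lemma moveMass_le (hpk : 0 ≤ p k) (hN : 0 < N) (hNk : N < k) {j : ℕ} (hj : j < N) :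
    moveMass p N k j ≤ p j := by
  rcases eq_or_ne j 0 with rfl | hj0
  · rw [moveMass_apply_zero hN hNk]
    have : (1 : ℝ) ≤ k / N := by
      rw [one_le_div (by exact_mod_cast hN)]
      exact_mod_cast hNk.le
    nlinarith
  · rw [moveMass_apply_of_ne hj0 hj.ne (by omega)]

lemma moveMass_apply_zero_lt (hN : 0 < N) (hNk : N < k) (hpk : 0 < p k) :
    moveMass p N k 0 < p 0 := by
  rw [moveMass_apply_zero hN hNk]
  have : (1 : ℝ) < k / N := by
    rw [one_lt_div (by exact_mod_cast hN)]
    exact_mod_cast hNk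
  nlinarith

end moveMass

open Finset Function in
lemma probLe_update_lt {n : ℕ} {p : Fin n → ℕ → ℝ} {m : Fin n} {q : ℕ → ℝ}
    (hp : ∀ i j, 0 ≤ p i j) (hp01 : ∀ i, 0 < p i 0 ∨ 0 < p i 1)
    (hq : ∀ j ≤ n, q j ≤ p m j) (hq0 : q 0 < p m 0) :
    probLe n (update p m q) < probLe n p := by
  have hsplit (r : Fin n → ℕ → ℝ) (f : Fin n → Fin (n + 1)) :
      ∏ i, r i (f i) = r m (f m) * ∏ i ∈ univ.erase m, r i (f i) :=
    (mul_prod_erase _ _ (mem_univ m)).symm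
  have hrest (f : Fin n → Fin (n + 1)) :
      ∏ i ∈ univ.erase m, update p m q i (f i) = ∏ i ∈ univ.erase m, p i (f i) :=
    prod_congr rfl fun i hi => by rw [update_of_ne (ne_of_mem_erase hi)]
  apply sum_lt_sum
  · intro f _
    rw [hsplit, hsplit p, hrest, update_self]
    exact mul_le_mul_of_nonneg_right (hq _ (Nat.lt_succ_iff.1 (f m).isLt))
      (prod_nonneg fun i _ => hp i _)
  · have hn := m.pos
    let f₀ : Fin n → Fin (n + 1) :=
      update (fun i => if 0 < p i 0 then 0 else ⟨1, by omega⟩) m 0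
    have hf₀_le (i : Fin n) : (f₀ i : ℕ) ≤ 1 := by
      unfold f₀
      rcases eq_or_ne i m with rfl | hi
      · simp
      · rw [update_of_ne hi]
        split_ifs <;> simp
    have hf₀_pos (i : Fin n) (hi : i ≠ m) : 0 < p i (f₀ i) := by
      simp only [f₀, update_of_ne hi]
      split_ifs with h
      · exact h
      · exact (hp01 i).resolve_left h
    refine ⟨f₀, ?_, ?_⟩
    · simp only [mem_filter, mem_univ, true_and]
      calc ∑ i, (f₀ i : ℕ) ≤ ∑ _i : Fin n, 1 := sum_le_sum fun i _ => hf₀_le i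
        _ = n := by simp
    · rw [hsplit, hsplit p, hrest, update_self, show f₀ m = 0 from update_self ..]
      exact mul_lt_mul_of_pos_right hq0
        (prod_pos fun i hi => hf₀_pos i (ne_of_mem_erase hi))

lemma exists_isDist_probLe_update_lt {n k : ℕ} (hk : n + 1 < k) {p : Fin n → ℕ → ℝ}
    (hp : ∀ i, IsDist (p i)) {m : Fin n} (hpm : 0 < p m k) :
    ∃ q : ℕ → ℝ, IsDist q ∧ probLe n (Function.update p m q) < probLe n p :=
  ⟨moveMass (p m) (n + 1) k, (hp m).moveMass n.succ_pos hk,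
    probLe_update_lt (fun i => (hp i).1) (fun i => (hp i).pos_zero_or_pos_one)
      (fun _ hj => moveMass_le ((hp m).1 k) n.succ_pos hk (Nat.lt_succ_of_le hj))
      (moveMass_apply_zero_lt n.succ_pos hk hpm)⟩

theorem stmt0_general (n : ℕ) :
    (∀ k : ℕ, n + 1 < k → ∀ p : Fin n → ℕ → ℝ, (∀ i, IsDist (p i)) →
      ∀ m : Fin n, 0 < p m k →
        ∃ q : ℕ → ℝ, IsDist q ∧ probLe n (Function.update p m q) < probLe n p) ∧
    (∀ p : Fin n → ℕ → ℝ, (∀ i, IsDist (p i)) →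
      (∀ p' : Fin n → ℕ → ℝ, (∀ i, IsDist (p' i)) → probLe n p ≤ probLe n p') →
      ∀ (m : Fin n) (k : ℕ), n + 1 < k → p m k = 0) := by
  refine ⟨fun k hk p hp m hpm => exists_isDist_probLe_update_lt hk hp hpm,
    fun p hp hmin m k hk => ?_⟩
  by_contra hne
  obtain ⟨q, hq, hlt⟩ :=
    exists_isDist_probLe_update_lt hk hp (((hp m).1 k).lt_of_ne (Ne.symm hne))
  have hq_dist : ∀ i, IsDist (Function.update p m q i) :=
    (Function.forall_update_iff p fun _ r => IsDist r).2 ⟨hq, fun i _ => hp i⟩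
  exact (hmin _ hq_dist).not_gt hlt

theorem stmt0 (n : ℕ) (hn : 2 ≤ n) :
    (∀ k : ℕ, n + 1 < k → ∀ p : Fin n → ℕ → ℝ, (∀ i, IsDist (p i)) →
      ∀ m : Fin n, 0 < p m k →
        ∃ q : ℕ → ℝ, IsDist q ∧ probLe n (Function.update p m q) < probLe n p) ∧
    (∀ p : Fin n → ℕ → ℝ, (∀ i, IsDist (p i)) →
      (∀ p' : Fin n → ℕ → ℝ, (∀ i, IsDist (p' i)) → probLe n p ≤ probLe n p') →
      ∀ (m : Fin n) (k : ℕ), n + 1 < k → p m k = 0) :=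
  stmt0_general n
end

section
/- A distribution minimizing P(X_1+...+X_n ≤ n) over independent nonnegative-integer-valued random variables each with mean 1 can be taken so that each X_i is supported on {0, j_i} for some integer 2 ≤ j_i ≤ n+1, with P(X_i = j_i) = 1/j_i and P(X_i = 0) = 1 - 1/j_i (or X_i ≡ 1). Equivalently, the minimum over all distributions equals the minimum over such two-point distributions. -/
/-!
Every mean-one distribution `r` on `ℕ` is the mixture `r = ∑ⱼ (j r j) • twoPoint j` of the
two-point laws `twoPoint j` on `{0, j}` with mean one. Since `P(∑ Xᵢ ≤ n)` is a linear function
of each mass function separately, with nonnegative coefficients depending only on the values at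
`0, …, n`, replacing one `Xᵢ` by the best `twoPoint j` does not increase it; beyond `j = n + 1`
only the mass `1 - 1/j` at `0` matters, so `j ≤ n + 1` suffices. Doing this for each coordinate in
turn reduces the minimisation to finitely many two-point configurations.
-/

open Finset Function

noncomputable def twoPoint (j : ℕ) : ℕ → ℝ :=
  fun x => if x = 0 then 1 - 1 / (j : ℝ) else if x = j then 1 / (j : ℝ) else 0

lemma twoPoint_one : twoPoint 1 = fun x => if x = 1 then 1 else 0 := by
  funext x
  rcases eq_or_ne x 0 with rfl | hx0
  · simp [twoPoint]
  · simp [twoPoint, hx0]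

lemma isDist_twoPoint {j : ℕ} (hj : 1 ≤ j) : IsDist (twoPoint j) := by
  have hj0 : j ≠ 0 := by omega
  have hjR : (1 : ℝ) ≤ j := by exact_mod_cast hj
  refine ⟨fun x => ?_, ?_, ?_⟩
  · have : 1 / (j : ℝ) ≤ 1 := by rwa [div_le_one (by positivity)]
    unfold twoPoint
    split_ifs <;> first | linarith | positivity
  · have h := (hasSum_ite_eq 0 (1 - 1 / (j : ℝ))).add (hasSum_ite_eq j (1 / (j : ℝ)))
    rw [sub_add_cancel] at h
    convert h using 2 with x
    rcases eq_or_ne x 0 with rfl | hx0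
    · simp [twoPoint, Ne.symm hj0]
    · simp [twoPoint, hx0]
  · convert hasSum_ite_eq j (1 : ℝ) using 2 with x
    rcases eq_or_ne x 0 with rfl | hx0
    · simp [twoPoint, Ne.symm hj0]
    · by_cases hxj : x = j
      · subst hxj; simp [twoPoint, hx0]
      · simp [twoPoint, hx0, hxj]

lemma twoPoint_le_twoPoint {i j k : ℕ} (hki : k < i) (hij : i ≤ j) :
    twoPoint i k ≤ twoPoint j k := by
  have hi : (0 : ℝ) < i := by exact_mod_cast (Nat.zero_lt_of_lt hki)
  have : 1 / (j : ℝ) ≤ 1 / i := one_div_le_one_div_of_le hi (by exact_mod_cast hij)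
  rcases eq_or_ne k 0 with rfl | hk
  · simp only [twoPoint, if_true]
    linarith
  · simp [twoPoint, hk, hki.ne, (hki.trans_le hij).ne]

lemma hasSum_mul_twoPoint {r : ℕ → ℝ} (hr : IsDist r) (k : ℕ) :
    HasSum (fun j : ℕ => (j * r j) * twoPoint j k) (r k) := by
  rcases eq_or_ne k 0 with rfl | hk
  · -- `j * (1 - 1/j) = j - 1` except at `j = 0`, where `1/0 = 0`
    have hterm : (fun j : ℕ => (j * r j) * twoPoint j 0) =
        fun j => j * r j - r j + if j = 0 then r 0 else 0 := by
      funext j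
      rcases eq_or_ne j 0 with rfl | hj
      · simp
      · have : (j : ℝ) ≠ 0 := by exact_mod_cast hj
        simp only [twoPoint, if_true, if_neg hj, add_zero]
        field_simp
    rw [hterm]
    simpa using (hr.2.2.sub hr.2.1).add (hasSum_ite_eq 0 (r 0))
  · convert hasSum_ite_eq k (r k) using 2 with j
    by_cases hjk : j = k
    · subst hjk
      have : (j : ℝ) ≠ 0 := by exact_mod_cast hk
      simp only [twoPoint, if_neg hk, if_true]
      field_simp
    · simp [twoPoint, hk, Ne.symm hjk, hjk]

lemma le_sum_of_forall_le_twoPoint {ι : Type*} [Fintype ι] (e : ι → ℕ) (c : ι → ℝ)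
    {r : ℕ → ℝ} (hr : IsDist r) {m : ℝ} (hm : ∀ j, 1 ≤ j → m ≤ ∑ k, c k * twoPoint j (e k)) :
    m ≤ ∑ k, c k * r (e k) := by
  have hmix : HasSum (fun j : ℕ => (j * r j) * ∑ k, c k * twoPoint j (e k))
      (∑ k, c k * r (e k)) := by
    simp_rw [Finset.mul_sum, mul_left_comm _ (c _)]
    exact hasSum_sum fun k _ => (hasSum_mul_twoPoint hr (e k)).mul_left (c k)
  have hweights : HasSum (fun j : ℕ => (j * r j) * m) m := by
    simpa using hr.2.2.mul_right m
  refine hasSum_le (fun j => ?_) hweights hmix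
  rcases Nat.eq_zero_or_pos j with rfl | hj
  · simp
  · exact mul_le_mul_of_nonneg_left (hm j hj) (mul_nonneg j.cast_nonneg (hr.1 j))

lemma exists_probLe_update_eq_sum {n : ℕ} {p : Fin n → ℕ → ℝ} (hp : ∀ i x, 0 ≤ p i x)
    (i₀ : Fin n) :
    ∃ c : Fin (n + 1) → ℝ, (∀ k, 0 ≤ c k) ∧
      ∀ r, probLe n (update p i₀ r) = ∑ k, c k * r k := by
  set S := univ.filter (fun f : Fin n → Fin (n + 1) => (∑ i, (f i : ℕ)) ≤ n)
  refine ⟨fun k => ∑ f ∈ S.filter (fun f => f i₀ = k), ∏ i ∈ univ.erase i₀, p i (f i),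
    fun k => sum_nonneg fun f _ => prod_nonneg fun i _ => hp i _, fun r => ?_⟩
  rw [probLe, ← sum_fiberwise S (fun f => f i₀)]
  refine sum_congr rfl fun k _ => ?_
  simp only [sum_mul]
  refine sum_congr rfl fun f hf => ?_
  rw [← prod_erase_mul univ _ (mem_univ i₀), update_self, (mem_filter.mp hf).2]
  congr 1
  exact prod_congr rfl fun i hi => by rw [update_of_ne (ne_of_mem_erase hi)]

lemma exists_probLe_update_twoPoint_le {n : ℕ} {p : Fin n → ℕ → ℝ} (hp : ∀ i, IsDist (p i))
    (i₀ : Fin n) :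
    ∃ j : Fin (n + 1), probLe n (update p i₀ (twoPoint (j + 1))) ≤ probLe n p := by
  obtain ⟨c, hc, hprob⟩ := exists_probLe_update_eq_sum (fun i => (hp i).1) i₀
  obtain ⟨j₀, hj₀⟩ := Finite.exists_min fun j : Fin (n + 1) => ∑ k, c k * twoPoint (j + 1) k
  refine ⟨j₀, ?_⟩
  rw [hprob, ← update_eq_self i₀ p, hprob]
  refine le_sum_of_forall_le_twoPoint Fin.val c (hp i₀) fun j hj => ?_
  rcases le_or_gt j (n + 1) with hjn | hjn
  · simpa [Nat.sub_add_cancel hj] using hj₀ ⟨j - 1, by omega⟩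
  · calc _ ≤ ∑ k, c k * twoPoint (n + 1) k := by simpa using hj₀ (Fin.last n)
      _ ≤ _ := sum_le_sum fun k _ =>
          mul_le_mul_of_nonneg_left (twoPoint_le_twoPoint k.isLt hjn.le) (hc k)

lemma exists_twoPoint_probLe_le {n : ℕ} (s : Finset (Fin n)) (p : Fin n → ℕ → ℝ)
    (hp : ∀ i, IsDist (p i)) (hs : ∀ i ∉ s, ∃ j : Fin (n + 1), p i = twoPoint (j + 1)) :
    ∃ g : Fin n → Fin (n + 1), probLe n (fun i => twoPoint (g i + 1)) ≤ probLe n p := by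
  induction s using Finset.induction_on generalizing p with
  | empty =>
    choose g hg using fun i => hs i (notMem_empty i)
    exact ⟨g, (congrArg (probLe n) (funext hg)).ge⟩
  | insert a s ha ih =>
    obtain ⟨j, hj⟩ := exists_probLe_update_twoPoint_le hp a
    have hp' : ∀ i, IsDist (update p a (twoPoint (j + 1)) i) := fun i => by
      rw [update_apply]
      split_ifs
      exacts [isDist_twoPoint (by omega), hp i]
    obtain ⟨g, hg⟩ := ih _ hp' fun i hi => by
      rcases eq_or_ne i a with rfl | hia
      · exact ⟨j, update_self _ _ _⟩
      · rw [update_of_ne hia]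
        exact hs i (by simp [hi, hia])
    exact ⟨g, hg.trans hj⟩

theorem stmt2_general (n : ℕ) :
    ∃ p : Fin n → ℕ → ℝ,
      (∀ i, IsDist (p i)) ∧
      (∀ i, (p i = fun x => if x = 1 then (1 : ℝ) else 0) ∨
        ∃ j : ℕ, 2 ≤ j ∧ j ≤ n + 1 ∧
          p i = fun x => if x = 0 then 1 - 1 / (j : ℝ)
                         else if x = j then 1 / (j : ℝ) else 0) ∧
      (∀ p' : Fin n → ℕ → ℝ, (∀ i, IsDist (p' i)) → probLe n p ≤ probLe n p') := by
  obtain ⟨g, hg⟩ := Finite.exists_min fun g : Fin n → Fin (n + 1) =>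
    probLe n (fun i => twoPoint (g i + 1))
  refine ⟨fun i => twoPoint (g i + 1), fun i => isDist_twoPoint (by omega), fun i => ?_,
    fun p' hp' => ?_⟩
  · rcases Nat.eq_zero_or_pos (g i) with h | h
    · left
      simp [h, twoPoint_one]
    · exact Or.inr ⟨g i + 1, by omega, by omega, rfl⟩
  · obtain ⟨g', hg'⟩ := exists_twoPoint_probLe_le univ p' hp' (by simp)
    exact (hg g').trans hg'

theorem stmt2 (n : ℕ) (hn : 2 ≤ n) :
    ∃ p : Fin n → ℕ → ℝ,
      (∀ i, IsDist (p i)) ∧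
      (∀ i, (p i = fun x => if x = 1 then (1 : ℝ) else 0) ∨
        ∃ j : ℕ, 2 ≤ j ∧ j ≤ n + 1 ∧
          p i = fun x => if x = 0 then 1 - 1 / (j : ℝ)
                         else if x = j then 1 / (j : ℝ) else 0) ∧
      (∀ p' : Fin n → ℕ → ℝ, (∀ i, IsDist (p' i)) → probLe n p ≤ probLe n p') :=
  stmt2_general n
end

section
/- For a binomial random variable B with parameters n and p = m/n where m is a positive integer with m ≤ n, the median of B equals m; in particular P(B ≤ m - 1) ≥ 1/2 - P(B = m). -/
/-!
For `B ~ Bin(n, x)` and `m ≥ 1`, `P(B ≥ m) = n C(n-1, m-1) ∫₀ˣ t^(m-1) (1-t)^(n-m) dt`: the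
derivative of the Bernstein tail sum telescopes. So at `x = m / n` the bound `P(B ≥ m) ≥ 1/2` says
that `f t = tᵃ (1 - t)ᵇ` (`a = m - 1`, `b = n - m`) has no more mass on `[p, 1]` than on `[0, p]`,
where `p = (a + 1) / (a + b + 1)`. This follows from a change of variables `φ` from part of `[0, p]`
onto `[p, 1]` with `f (φ u) |φ' u| ≤ f u`: for `b ≤ a` the reflection `u ↦ 2p - u`, for `a < b` the
involution inverting the odds `t / (1 - t)` about those of `p`. (No smooth map sending `0` to `1`
works when `a > b`, as `f` vanishes to order `b` at `1`.) Both pointwise inequalities are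
equalities at `u = p` and follow from the sign of the derivative of the logarithm of their ratio.
The bound `P(B ≤ m) ≥ 1/2` is the same statement for `n - B ~ Bin(n, 1 - m / n)`.
-/

section Calculus

theorem integral_le_integral_of_comp_mul_neg_deriv_le {f φ φ' : ℝ → ℝ} {a c d : ℝ}
    (hac : a ≤ c) (hcd : c ≤ d) (hf : Continuous f) (hf₀ : ∀ t ∈ Set.Icc a c, 0 ≤ f t)
    (hφ : ∀ u ∈ Set.Icc c d, HasDerivAt φ (φ' u) u) (hφ' : ContinuousOn φ' (Set.Icc c d))
    (hle : ∀ u ∈ Set.Icc c d, f (φ u) * -φ' u ≤ f u) :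
    ∫ t in φ d..φ c, f t ≤ ∫ t in a..d, f t := by
  rw [← Set.uIcc_of_le hcd] at hφ hφ'
  have hφc : ContinuousOn φ (Set.uIcc c d) := fun u hu =>
    (hφ u hu).continuousAt.continuousWithinAt
  calc ∫ t in φ d..φ c, f t = ∫ u in c..d, f (φ u) * -φ' u := by
        rw [intervalIntegral.integral_symm, ← intervalIntegral.integral_comp_mul_deriv hφ hφ' hf,
          ← intervalIntegral.integral_neg]
        simp only [Function.comp, mul_neg]
    _ ≤ ∫ u in c..d, f u :=
        intervalIntegral.integral_mono_on hcd
          ((hf.comp_continuousOn hφc).mul hφ'.neg).intervalIntegrable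
          (hf.intervalIntegrable _ _) hle
    _ ≤ ∫ t in a..d, f t := by
        rw [← intervalIntegral.integral_add_adjacent_intervals (hf.intervalIntegrable a c)
          (hf.intervalIntegrable c d)]
        exact le_add_of_nonneg_left (intervalIntegral.integral_nonneg hac hf₀)

theorem le_of_hasDerivAt_nonpos {g g' : ℝ → ℝ} {x y : ℝ} (hxy : x ≤ y)
    (hg : ∀ t ∈ Set.Icc x y, HasDerivAt g (g' t) t) (hg' : ∀ t ∈ Set.Ioo x y, g' t ≤ 0) :
    g y ≤ g x := by
  refine antitoneOn_of_hasDerivWithinAt_nonpos (f' := g') (convex_Icc x y)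
    (fun t ht => (hg t ht).continuousAt.continuousWithinAt) (fun t ht => ?_) (fun t ht => ?_)
    (Set.left_mem_Icc.2 hxy) (Set.right_mem_Icc.2 hxy) hxy
  · rw [interior_Icc] at ht ⊢
    exact (hg t (Set.Ioo_subset_Icc_self ht)).hasDerivWithinAt
  · rw [interior_Icc] at ht
    exact hg' t ht

theorem hasDerivAt_const_mul_log {f : ℝ → ℝ} {f' x : ℝ} (c : ℝ) (hf : HasDerivAt f f' x)
    (hx : f x ≠ 0) : HasDerivAt (fun y => c * Real.log (f y)) (c * f' / f x) x := by
  simpa [mul_div_assoc] using (hf.log hx).const_mul c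

theorem hasDerivAt_mobius (w : ℝ) {u : ℝ} (hu : w * (1 - u) + u ≠ 0) :
    HasDerivAt (fun u => w * (1 - u) / (w * (1 - u) + u)) (-w / (w * (1 - u) + u) ^ 2) u := by
  have hnum : HasDerivAt (fun u => w * (1 - u)) (w * -1) u :=
    ((hasDerivAt_id' u).const_sub 1).const_mul w
  have hden : HasDerivAt (fun u => w * (1 - u) + u) (w * -1 + 1) u := hnum.add (hasDerivAt_id' u)
  refine (hnum.div hden hu).congr_deriv ?_
  field_simp
  ring

theorem hasDerivAt_mul_log_sub_mul_log_odds (N c w : ℝ) {y : ℝ} (hy₀ : 0 < y) (hy₁ : y < 1)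
    (hD : w * (1 - y) + y ≠ 0) :
    HasDerivAt (fun y => N * Real.log (w * (1 - y) + y) - c * (Real.log y - Real.log (1 - y)))
      (-(c * (w * (1 - y) + y) - N * (1 - w) * (y * (1 - y))) /
        ((w * (1 - y) + y) * (y * (1 - y)))) y := by
  have hid := hasDerivAt_id' y
  have hDy : HasDerivAt (fun y => w * (1 - y) + y) (w * -1 + 1) y :=
    ((hid.const_sub 1).const_mul w).add hid
  have h₁ : 1 - y ≠ 0 := by linarith
  have hodds := (hid.log hy₀.ne').sub ((hid.const_sub 1).log h₁)
  refine ((hasDerivAt_const_mul_log N hDy hD).sub (hodds.const_mul c)).congr_deriv ?_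
  field_simp
  ring

end Calculus

section BetaIntegral

variable {a b : ℕ} {p : ℝ}

theorem div_sub_div_add_reflect_nonpos (hp : (a + b + 1) * p = a + 1) (hba : b ≤ a) {y : ℝ}
    (hy₁ : 2 * p - 1 < y) (hy₂ : y < p) :
    a / y - b / (1 - y) + (a / (2 * p - y) - b / (1 - (2 * p - y))) ≤ 0 := by
  have hba' : (b : ℝ) ≤ a := by exact_mod_cast hba
  have hp₁ : p ≤ 1 := by nlinarith
  have hp₂ : 1 ≤ 2 * p := by nlinarith
  have h₁ : 0 < y := by linarith
  have h₂ : 0 < 1 - y := by linarith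
  have h₃ : 0 < 2 * p - y := by linarith
  have h₄ : 0 < 1 - (2 * p - y) := by linarith
  have key : 0 ≤ p * (1 - p) ^ 2 + (p - y) ^ 2 * (a - b + (1 - p)) :=
    add_nonneg (mul_nonneg (by linarith) (sq_nonneg _)) (mul_nonneg (sq_nonneg _) (by linarith))
  -- With `q = 1 - p`, `s = p - y` the numerator is `2 (a p (q² - s²) - b q (p² - s²))`, and `hp`
  -- gives `b p - a q = q` and `a p - b q = a - b + q`.
  have : a / y - b / (1 - y) + (a / (2 * p - y) - b / (1 - (2 * p - y))) =
      -(2 * (p * (1 - p) ^ 2 + (p - y) ^ 2 * (a - b + (1 - p)))) /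
        (y * (1 - y) * (2 * p - y) * (1 - (2 * p - y))) := by
    field_simp
    linear_combination (-(2 * p - 4 * y * p + 2 * y ^ 2)) * hp
  rw [this]
  exact div_nonpos_of_nonpos_of_nonneg (by linarith) (by positivity)

theorem pow_mul_one_sub_pow_reflect_le (hp : (a + b + 1) * p = a + 1) (hba : b ≤ a) {u : ℝ}
    (hu : u ∈ Set.Icc (2 * p - 1) p) :
    (2 * p - u) ^ a * (1 - (2 * p - u)) ^ b ≤ u ^ a * (1 - u) ^ b := by
  have hba' : (b : ℝ) ≤ a := by exact_mod_cast hba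
  have hp₁ : p ≤ 1 := by nlinarith
  have hp₂ : 1 ≤ 2 * p := by nlinarith
  obtain ⟨hu₁, hu₂⟩ := hu
  rcases hu₂.eq_or_lt with rfl | hup
  · rw [show 2 * u - u = u by ring]
  rcases hu₁.eq_or_lt with rfl | hu₁
  · have hb : b ≠ 0 := by
      rintro rfl
      rw [Nat.cast_zero, add_zero] at hp
      have : p = 1 := mul_left_cancel₀ (by positivity) (hp.trans (mul_one _).symm)
      linarith
    rw [show 1 - (2 * p - (2 * p - 1)) = 0 by ring, zero_pow hb, mul_zero]
    exact mul_nonneg (pow_nonneg (by linarith) _) (pow_nonneg (by linarith) _)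
  set G : ℝ → ℝ := fun y => a * Real.log y + b * Real.log (1 - y) - a * Real.log (2 * p - y)
    - b * Real.log (1 - (2 * p - y))
  have hG : ∀ y ∈ Set.Icc u p, HasDerivAt G
      (a / y - b / (1 - y) + (a / (2 * p - y) - b / (1 - (2 * p - y)))) y := by
    rintro y ⟨hy₁, hy₂⟩
    have h₁ : y ≠ 0 := by linarith
    have h₂ : 1 - y ≠ 0 := by linarith
    have h₃ : 2 * p - y ≠ 0 := by linarith
    have h₄ : 1 - (2 * p - y) ≠ 0 := by linarith
    have hid := hasDerivAt_id' y
    refine ((((hasDerivAt_const_mul_log a hid h₁).add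
      (hasDerivAt_const_mul_log b (hid.const_sub 1) h₂)).sub
      (hasDerivAt_const_mul_log a (hid.const_sub (2 * p)) h₃)).sub
      (hasDerivAt_const_mul_log b ((hid.const_sub (2 * p)).const_sub 1) h₄)).congr_deriv (by ring)
  have hGu := le_of_hasDerivAt_nonpos hup.le hG fun y hy =>
    div_sub_div_add_reflect_nonpos hp hba (hu₁.trans hy.1) hy.2
  have hGp : G p = 0 := by simp only [G, show 2 * p - p = p by ring]; ring
  have h₁ : 0 < 2 * p - u := by linarith
  have h₂ : 0 < 1 - (2 * p - u) := by linarith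
  have h₃ : 0 < u := by linarith
  have h₄ : 0 < 1 - u := by linarith
  rw [← Real.log_le_log_iff (by positivity) (by positivity), Real.log_mul (by positivity)
    (by positivity), Real.log_mul (by positivity) (by positivity), Real.log_pow, Real.log_pow,
    Real.log_pow, Real.log_pow]
  simp only [G] at hGu hGp
  linarith

theorem mul_one_sub_sq_mul_le (hab : a < b) {x y : ℝ} (hbx : b * x = a + 1) (hx : 0 ≤ x)
    (hy₀ : 0 ≤ y) (hy₁ : y ≤ 1) :
    (a + b + 2) * (1 - x ^ 2) * (y * (1 - y)) ≤ (b - a) * (x ^ 2 * (1 - y) + y) := by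
  have hsq : 0 ≤ (b - a) * (x * (1 - y) - y) ^ 2 := by
    have : (a : ℝ) < b := by exact_mod_cast hab
    exact mul_nonneg (by linarith) (sq_nonneg _)
  have hpos : 0 ≤ 2 * x * (1 + x) * (y * (1 - y)) := by
    have : 0 ≤ 1 - y := by linarith
    positivity
  linear_combination hsq + hpos - 2 * (1 + x) * (y * (1 - y)) * hbx

theorem pow_mul_one_sub_pow_mobius_le (hab : a < b) {x : ℝ} (hx₀ : 0 < x) (hbx : b * x = a + 1)
    (hxp : x * (1 - p) = p) {u : ℝ} (hu : u ∈ Set.Icc 0 p) :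
    (x ^ 2) ^ (a + 1) * ((1 - u) ^ a * u ^ b) ≤
      u ^ a * (1 - u) ^ b * (x ^ 2 * (1 - u) + u) ^ (a + b + 2) := by
  have hp₁ : p < 1 := by nlinarith
  have h1p : 1 - p ≠ 0 := by linarith
  obtain ⟨hu₀, hup⟩ := hu
  rcases hu₀.eq_or_lt with rfl | hu₀
  · rw [zero_pow (by omega : b ≠ 0), mul_zero, mul_zero, sub_zero]
    positivity
  set D : ℝ → ℝ := fun y => x ^ 2 * (1 - y) + y
  have hD : ∀ y ∈ Set.Icc u p, 0 < D y := fun y hy => by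
    have : 0 ≤ x ^ 2 * (1 - y) := mul_nonneg (sq_nonneg _) (by linarith [hy.2])
    simp only [D]
    linarith [hy.1]
  set G : ℝ → ℝ := fun y => (a + b + 2 : ℝ) * Real.log (D y)
    - (b - a) * (Real.log y - Real.log (1 - y)) - 2 * (a + 1) * Real.log x
  have hG : ∀ y ∈ Set.Icc u p, HasDerivAt G
      (-((b - a) * D y - (a + b + 2) * (1 - x ^ 2) * (y * (1 - y))) / (D y * (y * (1 - y)))) y :=
    fun y hy => (hasDerivAt_mul_log_sub_mul_log_odds _ _ _ (by linarith [hy.1]) (by linarith [hy.2])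
      (hD y hy).ne').sub_const _
  have hGu := le_of_hasDerivAt_nonpos hup hG fun y hy =>
    div_nonpos_of_nonpos_of_nonneg (neg_nonpos.2 (sub_nonneg.2
      (mul_one_sub_sq_mul_le hab hbx hx₀.le (by linarith [hy.1]) (by linarith [hy.2]))))
      (mul_nonneg (hD y (Set.Ioo_subset_Icc_self hy)).le
        (mul_nonneg (by linarith [hy.1]) (by linarith [hy.2])))
  have hGp : G p = 0 := by
    have hDp : D p = x := by simp only [D]; linear_combination (x - 1) * hxp
    have hlogp : Real.log p = Real.log x + Real.log (1 - p) := by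
      rw [← Real.log_mul hx₀.ne' h1p, hxp]
    simp only [G, hDp, hlogp]
    ring
  have hDu := hD u (Set.left_mem_Icc.2 hup)
  have h₁ : 0 < 1 - u := by linarith
  rw [← Real.log_le_log_iff (by positivity) (by positivity), Real.log_mul (by positivity)
    (by positivity), Real.log_mul (by positivity) (by positivity), Real.log_mul (by positivity)
    (by positivity), Real.log_mul (by positivity) (by positivity)]
  simp only [Real.log_pow, G] at hGu hGp ⊢
  push_cast at hGu hGp ⊢
  linarith

theorem integral_pow_mul_one_sub_pow_above_le_below_of_lt (hp : (a + b + 1) * p = a + 1)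
    (hab : a < b) : ∫ t in p..1, t ^ a * (1 - t) ^ b ≤ ∫ t in 0..p, t ^ a * (1 - t) ^ b := by
  have hp₀ : 0 < p := by nlinarith
  have hp₁ : p < 1 := by
    have : (a : ℝ) + 1 ≤ b := by exact_mod_cast hab
    nlinarith
  have h1p : 1 - p ≠ 0 := by linarith
  obtain ⟨x, hx⟩ : ∃ x, x = p / (1 - p) := ⟨_, rfl⟩
  have hx₀ : 0 < x := by rw [hx]; exact div_pos hp₀ (by linarith)
  have hxp : x * (1 - p) = p := by rw [hx, div_mul_cancel₀ _ h1p]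
  have hbx : b * x = a + 1 := by
    rw [hx, mul_div_assoc', div_eq_iff h1p]
    linear_combination hp
  have hD : ∀ u ∈ Set.Icc 0 p, 0 < x ^ 2 * (1 - u) + u := fun u hu => by
    have : 0 < x ^ 2 * (1 - u) := mul_pos (by positivity) (by linarith [hu.2])
    linarith [hu.1]
  -- `u ↦ x² (1 - u) / (x² (1 - u) + u)` sends the odds `s` of `u` to `x² / s`: it swaps `0` and `1`
  -- and fixes `p`, whose odds are `x`.
  have hφ : ∀ u ∈ Set.Icc 0 p, HasDerivAt (fun u => x ^ 2 * (1 - u) / (x ^ 2 * (1 - u) + u))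
      (-x ^ 2 / (x ^ 2 * (1 - u) + u) ^ 2) u := fun u hu => hasDerivAt_mobius _ (hD u hu).ne'
  have hφ' : ContinuousOn (fun u => -x ^ 2 / (x ^ 2 * (1 - u) + u) ^ 2) (Set.Icc 0 p) :=
    continuousOn_const.div (by fun_prop) fun u hu => pow_ne_zero 2 (hD u hu).ne'
  have hle : ∀ u ∈ Set.Icc 0 p, (x ^ 2 * (1 - u) / (x ^ 2 * (1 - u) + u)) ^ a *
      (1 - x ^ 2 * (1 - u) / (x ^ 2 * (1 - u) + u)) ^ b *
      -(-x ^ 2 / (x ^ 2 * (1 - u) + u) ^ 2) ≤ u ^ a * (1 - u) ^ b := by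
    intro u hu
    have hDu := hD u hu
    have h₁ : 1 - x ^ 2 * (1 - u) / (x ^ 2 * (1 - u) + u) = u / (x ^ 2 * (1 - u) + u) := by
      field_simp
      ring
    rw [h₁, div_pow, div_pow, neg_div, neg_neg, div_mul_div_comm, div_mul_div_comm, ← pow_add,
      ← pow_add, div_le_iff₀ (by positivity)]
    exact (le_of_eq (by rw [mul_pow, pow_succ]; ring)).trans
      (pow_mul_one_sub_pow_mobius_le hab hx₀ hbx hxp hu)
  have hφp : x ^ 2 * (1 - p) / (x ^ 2 * (1 - p) + p) = p := by
    rw [hx]; field_simp; ring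
  have hφ0 : x ^ 2 * (1 - 0) / (x ^ 2 * (1 - 0) + 0) = 1 := by
    simp [hx₀.ne']
  have := integral_le_integral_of_comp_mul_neg_deriv_le (f := fun t => t ^ a * (1 - t) ^ b)
    le_rfl hp₀.le (by fun_prop)
    (fun t ht => mul_nonneg (pow_nonneg ht.1 _) (pow_nonneg (by linarith [ht.2]) _)) hφ hφ' hle
  rwa [hφp, hφ0] at this

theorem integral_pow_mul_one_sub_pow_above_le_below_of_le (hp : (a + b + 1) * p = a + 1)
    (hba : b ≤ a) : ∫ t in p..1, t ^ a * (1 - t) ^ b ≤ ∫ t in 0..p, t ^ a * (1 - t) ^ b := by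
  have hba' : (b : ℝ) ≤ a := by exact_mod_cast hba
  have hp₁ : p ≤ 1 := by nlinarith
  have hp₂ : 1 ≤ 2 * p := by nlinarith
  have := integral_le_integral_of_comp_mul_neg_deriv_le (f := fun t => t ^ a * (1 - t) ^ b)
    (c := 2 * p - 1) (by linarith) (by linarith) (by fun_prop)
    (fun t ht => mul_nonneg (pow_nonneg ht.1 _) (pow_nonneg (by linarith [ht.2]) _))
    (fun u _ => (hasDerivAt_id' u).const_sub (2 * p)) continuousOn_const
    (fun u hu => by simpa using pow_mul_one_sub_pow_reflect_le hp hba hu)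
  rwa [show 2 * p - p = p by ring, show 2 * p - (2 * p - 1) = 1 by ring] at this

theorem integral_pow_mul_one_sub_pow_above_le_below (hp : (a + b + 1) * p = a + 1) :
    ∫ t in p..1, t ^ a * (1 - t) ^ b ≤ ∫ t in 0..p, t ^ a * (1 - t) ^ b :=
  (lt_or_ge a b).elim (integral_pow_mul_one_sub_pow_above_le_below_of_lt hp)
    (integral_pow_mul_one_sub_pow_above_le_below_of_le hp)

end BetaIntegral

section Bernstein

open Polynomial

theorem derivative_sum_bernsteinPolynomial_Icc (R : Type*) [CommRing R] (n r : ℕ) :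
    derivative (∑ k ∈ Finset.Icc (r + 1) (n + 1), bernsteinPolynomial R (n + 1) k) =
      (n + 1) * bernsteinPolynomial R n r := by
  have telescope := Finset.sum_range_sub' (fun j => bernsteinPolynomial R n (r + j)) (n + 1 - r)
  simp only [← add_assoc, add_zero,
    bernsteinPolynomial.eq_zero_of_lt R (by omega : n < r + (n + 1 - r)), sub_zero] at telescope
  rw [← Finset.Ico_add_one_right_eq_Icc, Finset.sum_Ico_eq_sum_range, derivative_sum,
    show n + 1 + 1 - (r + 1) = n + 1 - r by omega]
  simp only [add_right_comm r 1, bernsteinPolynomial.derivative_succ_aux, ← Finset.mul_sum,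
    telescope]

theorem sum_bernsteinPolynomial_Icc_eval_eq_integral (n r : ℕ) (x : ℝ) :
    ∑ k ∈ Finset.Icc (r + 1) (n + 1), (bernsteinPolynomial ℝ (n + 1) k).eval x =
      (n + 1) * ∫ t in 0..x, (bernsteinPolynomial ℝ n r).eval t := by
  set P := ∑ k ∈ Finset.Icc (r + 1) (n + 1), bernsteinPolynomial ℝ (n + 1) k
  have hP0 : P.eval 0 = 0 := by
    simp only [P, eval_finsetSum, bernsteinPolynomial.eval_at_0]
    exact Finset.sum_eq_zero fun k hk => if_neg (by rw [Finset.mem_Icc] at hk; omega)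
  have hFTC := intervalIntegral.integral_eq_sub_of_hasDerivAt (a := 0) (b := x)
    (fun t _ => P.hasDerivAt t) (P.derivative.continuous.intervalIntegrable _ _)
  rw [derivative_sum_bernsteinPolynomial_Icc, hP0, sub_zero] at hFTC
  rw [← eval_finsetSum, ← hFTC, ← intervalIntegral.integral_const_mul]
  simp

theorem half_le_sum_bernsteinPolynomial_Icc_eval {n r : ℕ} (hr : r ≤ n) :
    1 / 2 ≤ ∑ k ∈ Finset.Icc (r + 1) (n + 1),
      (bernsteinPolynomial ℝ (n + 1) k).eval ((r + 1 : ℝ) / (n + 1)) := by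
  set p : ℝ := (r + 1) / (n + 1)
  have hp : ((r : ℝ) + (n - r : ℕ) + 1) * p = r + 1 := by
    rw [Nat.cast_sub hr, show (r : ℝ) + (n - r) + 1 = n + 1 by ring]
    exact mul_div_cancel₀ _ (by positivity)
  have hbeta := integral_pow_mul_one_sub_pow_above_le_below hp
  have heval : ∀ t : ℝ,
      (bernsteinPolynomial ℝ n r).eval t = n.choose r * (t ^ r * (1 - t) ^ (n - r)) :=
    fun t => by simp [bernsteinPolynomial, mul_assoc]
  have htotal :
      ∑ k ∈ Finset.Icc (r + 1) (n + 1), (bernsteinPolynomial ℝ (n + 1) k).eval 1 = 1 := by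
    simp [bernsteinPolynomial.eval_at_1, hr]
  rw [sum_bernsteinPolynomial_Icc_eval_eq_integral,
    ← intervalIntegral.integral_add_adjacent_intervals
    ((bernsteinPolynomial ℝ n r).continuous.intervalIntegrable 0 p)
    ((bernsteinPolynomial ℝ n r).continuous.intervalIntegrable p 1)] at htotal
  rw [sum_bernsteinPolynomial_Icc_eval_eq_integral]
  simp only [heval, intervalIntegral.integral_const_mul] at htotal ⊢
  have hK : (0 : ℝ) ≤ (n + 1) * n.choose r := by positivity
  nlinarith [mul_le_mul_of_nonneg_left hbeta hK]

end Bernstein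

theorem half_le_sum_Icc_choose_mul_pow {n m : ℕ} (hmn : m ≤ n) :
    1 / 2 ≤ ∑ k ∈ Finset.Icc m n,
      (n.choose k : ℝ) * ((m : ℝ) / n) ^ k * (1 - (m : ℝ) / n) ^ (n - k) := by
  rcases m with _ | r
  · rw [Finset.sum_eq_single 0 (fun k _ hk => by simp [hk]) (by simp)]
    norm_num
  · obtain ⟨N, rfl⟩ : ∃ N, n = N + 1 := ⟨n - 1, by omega⟩
    simpa [bernsteinPolynomial] using half_le_sum_bernsteinPolynomial_Icc_eval (by omega : r ≤ N)

theorem sum_range_choose_mul_pow_eq_sum_Icc {n m : ℕ} (hmn : m ≤ n) (x : ℝ) :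
    ∑ k ∈ Finset.range (m + 1), (n.choose k : ℝ) * x ^ k * (1 - x) ^ (n - k) =
      ∑ k ∈ Finset.Icc (n - m) n, (n.choose k : ℝ) * (1 - x) ^ k * (1 - (1 - x)) ^ (n - k) := by
  refine Finset.sum_nbij' (n - ·) (n - ·) ?_ ?_ ?_ ?_ fun k hk => ?_
  iterate 4 (intro k hk; simp only [Finset.mem_range, Finset.mem_Icc] at hk ⊢; omega)
  rw [Finset.mem_range] at hk
  rw [Nat.choose_symm (by omega), Nat.sub_sub_self (by omega), sub_sub_cancel]
  ring

theorem stmt4 (n m : ℕ) (hm : 1 ≤ m) (hmn : m ≤ n) :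
    ((1 : ℝ) / 2 ≤ ∑ k ∈ Finset.range (m + 1),
        (n.choose k : ℝ) * ((m : ℝ) / n) ^ k * (1 - (m : ℝ) / n) ^ (n - k)) ∧
    ((1 : ℝ) / 2 ≤ ∑ k ∈ Finset.Icc m n,
        (n.choose k : ℝ) * ((m : ℝ) / n) ^ k * (1 - (m : ℝ) / n) ^ (n - k)) ∧
    ((1 : ℝ) / 2 - (n.choose m : ℝ) * ((m : ℝ) / n) ^ m * (1 - (m : ℝ) / n) ^ (n - m) ≤
      ∑ k ∈ Finset.range m,
        (n.choose k : ℝ) * ((m : ℝ) / n) ^ k * (1 - (m : ℝ) / n) ^ (n - k)) := by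
  have hn : (n : ℝ) ≠ 0 := by norm_cast; omega
  have hcompl : ((n - m : ℕ) : ℝ) / n = 1 - (m : ℝ) / n := by
    rw [Nat.cast_sub hmn, sub_div, div_self hn]
  have hlower : (1 : ℝ) / 2 ≤ ∑ k ∈ Finset.range (m + 1),
      (n.choose k : ℝ) * ((m : ℝ) / n) ^ k * (1 - (m : ℝ) / n) ^ (n - k) := by
    rw [sum_range_choose_mul_pow_eq_sum_Icc hmn, ← hcompl]
    exact half_le_sum_Icc_choose_mul_pow (Nat.sub_le n m)
  rw [Finset.sum_range_succ] at hlower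
  exact ⟨by rwa [Finset.sum_range_succ], half_le_sum_Icc_choose_mul_pow hmn, by linarith⟩
end

section
/- For n ≥ 4 and 1 ≤ m ≤ n-1, the central-type binomial probability C(n,m) (m/n)^m (1 - m/n)^{n-m} is at most sqrt(n / (6 m (n-m))). -/
/-!
Writing `j! = s_j √(2j) (j/e)^j` with `s_j` the Stirling sequence, the powers of `e` and of `n`
cancel and `C(n,m) (m/n)^m (k/n)^k = s_n / (s_m s_k) · √(n / (2mk))` for `n = m + k`.
The sequence `s_j` decreases to `√π`, so `s_m s_k ≥ π`, while `s_n ≤ s_4 ≤ π / √3` for `n ≥ 4`.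
-/

open Real Stirling
open scoped Nat

namespace Stirling

theorem stirlingSeq_pos {n : ℕ} (hn : n ≠ 0) : 0 < stirlingSeq n :=
  (sqrt_pos.2 pi_pos).trans_le (sqrt_pi_le_stirlingSeq hn)

theorem stirlingSeq_le_of_le {m n : ℕ} (hm : m ≠ 0) (h : m ≤ n) :
    stirlingSeq n ≤ stirlingSeq m := by
  obtain ⟨m, rfl⟩ := Nat.exists_eq_succ_of_ne_zero hm
  obtain ⟨n, rfl⟩ := Nat.exists_eq_succ_of_ne_zero (by omega : n ≠ 0)
  exact stirlingSeq'_antitone (Nat.succ_le_succ_iff.1 h)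

theorem factorial_eq_stirlingSeq_mul {n : ℕ} (hn : n ≠ 0) :
    (n ! : ℝ) = stirlingSeq n * (√(2 * n) * (n / exp 1) ^ n) := by
  rw [stirlingSeq, div_mul_cancel₀]
  positivity

theorem stirlingSeq_four_le : stirlingSeq 4 ≤ π / √3 := by
  have hsq : (stirlingSeq 4 * √3) ^ 2 = 27 * exp 1 ^ 8 / 8192 := by
    rw [stirlingSeq, mul_pow, div_pow, mul_pow, sq_sqrt (by positivity), sq_sqrt (by positivity),
      div_pow, div_pow, ← pow_mul]
    simp only [Nat.factorial, Nat.cast_ofNat]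
    field_simp
    norm_num
  have he : exp 1 ^ 8 ≤ 2.7182818286 ^ 8 := by gcongr; exact exp_one_lt_d9.le
  have hpi : (3.141592 : ℝ) ^ 2 ≤ π ^ 2 := by gcongr; exact pi_gt_d6.le
  rw [le_div_iff₀ (by positivity)]
  refine le_of_pow_le_pow_left₀ two_ne_zero pi_pos.le ?_
  rw [hsq]
  norm_num at he hpi ⊢
  linarith

theorem stirlingSeq_div_mul_stirlingSeq_le {n m k : ℕ} (hn : 4 ≤ n) (hm : m ≠ 0) (hk : k ≠ 0) :
    stirlingSeq n / (stirlingSeq m * stirlingSeq k) ≤ 1 / √3 := by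
  have hprod : π ≤ stirlingSeq m * stirlingSeq k := by
    rw [← mul_self_sqrt pi_pos.le]
    exact mul_le_mul (sqrt_pi_le_stirlingSeq hm) (sqrt_pi_le_stirlingSeq hk)
      (sqrt_nonneg π) (stirlingSeq_pos hm).le
  calc stirlingSeq n / (stirlingSeq m * stirlingSeq k)
      ≤ π / √3 / π :=
        div_le_div₀ (by positivity) ((stirlingSeq_le_of_le four_ne_zero hn).trans
          stirlingSeq_four_le) pi_pos hprod
    _ = 1 / √3 := by field_simp

end Stirling

theorem choose_mul_pow_mul_pow_eq_stirlingSeq {m k : ℕ} (hm : m ≠ 0) (hk : k ≠ 0) :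
    ((m + k).choose m : ℝ) * ((m : ℝ) / (m + k)) ^ m * ((k : ℝ) / (m + k)) ^ k =
      stirlingSeq (m + k) / (stirlingSeq m * stirlingSeq k) * √((m + k) / (2 * m * k)) := by
  have hsm := (stirlingSeq_pos hm).ne'
  have hsk := (stirlingSeq_pos hk).ne'
  rw [Nat.cast_choose ℝ (Nat.le_add_right m k), Nat.add_sub_cancel_left,
    factorial_eq_stirlingSeq_mul hm, factorial_eq_stirlingSeq_mul hk,
    factorial_eq_stirlingSeq_mul (by omega), Nat.cast_add]
  simp only [div_pow, pow_add]
  rw [sqrt_div (by positivity), sqrt_mul (by positivity), sqrt_mul (by positivity),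
    sqrt_mul (by positivity), sqrt_mul (by positivity), sqrt_mul (by positivity)]
  field_simp

theorem stmt5 (n m : ℕ) (hn : 4 ≤ n) (hm : 1 ≤ m) (hmn : m ≤ n - 1) :
    (n.choose m : ℝ) * ((m : ℝ) / n) ^ m * (1 - (m : ℝ) / n) ^ (n - m) ≤
      Real.sqrt ((n : ℝ) / (6 * m * ((n : ℝ) - m))) := by
  obtain ⟨k, rfl⟩ : ∃ k, n = m + k := ⟨n - m, by omega⟩
  have hm0 : m ≠ 0 := by omega
  have hk0 : k ≠ 0 := by omega
  have hcompl : 1 - (m : ℝ) / (m + k) = k / (m + k) := by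
    field_simp
    ring
  rw [Nat.add_sub_cancel_left, Nat.cast_add, hcompl, add_sub_cancel_left,
    choose_mul_pow_mul_pow_eq_stirlingSeq hm0 hk0]
  calc stirlingSeq (m + k) / (stirlingSeq m * stirlingSeq k) * √((m + k) / (2 * m * k))
      ≤ 1 / √3 * √((m + k) / (2 * m * k)) :=
        mul_le_mul_of_nonneg_right (stirlingSeq_div_mul_stirlingSeq_le hn hm0 hk0) (sqrt_nonneg _)
    _ = √((m + k) / (6 * m * k)) := by
        rw [one_div_mul_eq_div, ← sqrt_div' _ (by norm_num : (0 : ℝ) ≤ 3)]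
        ring_nf
end

section
/- For positive integers m and n with m ≤ n, the ratio n(n-1)···(n-m+1)/n^m is at least exp(-m·r·(1+r)/2) where r = m/n, provided r ≤ 1/2. -/
/-!
Writing the ratio as `∏_{k<m} (1 - k/n)`, each factor is at least `exp (-(1 + r) k/n)`, because
`1 - x ≥ exp (-x - x²)` on `[0, 1/2]` and `k/n ≤ r`. Multiplying, the exponents add up to
`-(1 + r) (∑_{k<m} k) / n ≥ -(1 + r) m² / (2n) = -m r (1 + r) / 2`.
-/

open Finset Real

lemma exp_neg_mul_le_one_sub {x r : ℝ} (hx : 0 ≤ x) (hxr : x ≤ r) (hr : r ≤ 1 / 2) :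
    exp (-((1 + r) * x)) ≤ 1 - x := by
  set t := x + x ^ 2
  have ht : 0 ≤ t := by positivity
  have hquad : 1 + t + t ^ 2 / 2 ≤ exp t := quadratic_le_exp_of_nonneg ht
  have hpos : 0 < 1 + t + t ^ 2 / 2 := by positivity
  calc exp (-((1 + r) * x)) ≤ exp (-t) := exp_le_exp.2 (by nlinarith)
    _ = 1 / exp t := by rw [exp_neg, one_div]
    _ ≤ 1 / (1 + t + t ^ 2 / 2) := one_div_le_one_div_of_le hpos hquad
    _ ≤ 1 - x := by
      rw [div_le_iff₀ hpos]
      nlinarith [sq_nonneg x, mul_nonneg hx (sq_nonneg x)]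

lemma sum_range_natCast_le (m : ℕ) : ∑ k ∈ range m, (k : ℝ) ≤ (m : ℝ) ^ 2 / 2 := by
  have h : (∑ k ∈ range m, k) * 2 ≤ m * m := by
    rw [sum_range_id_mul_two]
    exact Nat.mul_le_mul_left m (Nat.sub_le m 1)
  have h' : ((∑ k ∈ range m, k : ℕ) : ℝ) * 2 ≤ ((m * m : ℕ) : ℝ) := by exact_mod_cast h
  push_cast at h'
  linarith

theorem stmt6_general (n m : ℕ) (hmn : m ≤ n) (hr : (m : ℝ) / n ≤ 1 / 2) :
    Real.exp (-(m : ℝ) * ((m : ℝ) / n) * (1 + (m : ℝ) / n) / 2) ≤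
      (∏ k ∈ Finset.range m, ((n : ℝ) - k)) / (n : ℝ) ^ m := by
  set r := (m : ℝ) / n
  have hterm : ∀ k ∈ range m, exp (-((1 + r) * (k / n))) ≤ ((n : ℝ) - k) / n := by
    intro k hk
    have hkm : k < m := mem_range.1 hk
    have hn : (0 : ℝ) < n := by exact_mod_cast (k.zero_le.trans_lt hkm).trans_le hmn
    rw [sub_div, div_self hn.ne']
    exact exp_neg_mul_le_one_sub (by positivity)
      (div_le_div_of_nonneg_right (by exact_mod_cast hkm.le) hn.le) hr
  have hsum : (1 + r) * ((∑ k ∈ range m, (k : ℝ)) / n) ≤ m * r * (1 + r) / 2 :=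
    calc (1 + r) * ((∑ k ∈ range m, (k : ℝ)) / n) ≤ (1 + r) * ((m : ℝ) ^ 2 / 2 / n) := by
          gcongr; exact sum_range_natCast_le m
      _ = m * r * (1 + r) / 2 := by ring
  calc exp (-(m : ℝ) * r * (1 + r) / 2)
      ≤ exp (∑ k ∈ range m, -((1 + r) * (k / n))) := by
        rw [exp_le_exp, sum_neg_distrib, ← mul_sum, ← sum_div]
        linarith
    _ = ∏ k ∈ range m, exp (-((1 + r) * (k / n))) := exp_sum _ _
    _ ≤ ∏ k ∈ range m, ((n : ℝ) - k) / n := prod_le_prod (fun _ _ => (exp_pos _).le) hterm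
    _ = (∏ k ∈ range m, ((n : ℝ) - k)) / (n : ℝ) ^ m := by
        rw [prod_div_distrib, prod_const, card_range]

theorem stmt6 (n m : ℕ) (hm : 1 ≤ m) (hmn : m ≤ n) (hr : (m : ℝ) / n ≤ 1 / 2) :
    Real.exp (-(m : ℝ) * ((m : ℝ) / n) * (1 + (m : ℝ) / n) / 2) ≤
      (∏ k ∈ Finset.range m, ((n : ℝ) - k)) / (n : ℝ) ^ m :=
  stmt6_general n m hmn hr
end

section
/- For every integer m ≥ 1, ∑_{k=0}^{m-1} ( e · m^k / k! − (m+1)^k / k! ) < (m+1)^m / m!. -/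
/-!
Write `a j = m ^ j / j!` and `t n = e - ∑_{i<n} 1/i!`. The truncated Cauchy product of the series
of `e ^ m` and `e` gives `∑_{k ≤ m} (m+1)^k / k! = ∑_{j ≤ m} a j (e - t (m+1-j))`, so the claim
is equivalent to `∑_{j<m} a j t (m+1-j) < a m`. Since `a j ≤ a m` for `j ≤ m`, it suffices that
`∑_{r<m} t (r+2) < 1`.
-/

open Finset Nat

noncomputable def expOneTail (n : ℕ) : ℝ := Real.exp 1 - ∑ i ∈ range n, 1 / (i ! : ℝ)

lemma expOneTail_pos (n : ℕ) : 0 < expOneTail n := by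
  have h := Real.sum_le_exp_of_nonneg zero_le_one (n + 1)
  simp only [one_pow, sum_range_succ] at h
  have : (0 : ℝ) < 1 / n ! := by positivity
  rw [expOneTail]
  linarith

lemma expOneTail_succ (n : ℕ) : expOneTail (n + 1) = expOneTail n - 1 / n ! := by
  rw [expOneTail, expOneTail, sum_range_succ]
  ring

lemma expOneTail_le {n : ℕ} (hn : 0 < n) : expOneTail n ≤ (n + 1) / (n ! * n) := by
  have h := Real.exp_bound' zero_le_one le_rfl hn
  simp only [one_pow, one_mul] at h
  rw [expOneTail]
  linarith

lemma sum_expOneTail_add_two (m : ℕ) :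
    ∑ r ∈ range m, expOneTail (r + 2) = 1 - 1 / (m + 1)! + m * expOneTail (m + 2) := by
  induction m with
  | zero => simp
  | succ m ih =>
    rw [sum_range_succ, ih, expOneTail_succ (m + 2), factorial_succ (m + 1)]
    push_cast
    field_simp
    ring

/-- The full series `∑ r, expOneTail (r + 2) = ∑_{i ≥ 2} (i - 1) / i!` telescopes to `1`. -/
lemma sum_expOneTail_add_two_lt_one (m : ℕ) : ∑ r ∈ range m, expOneTail (r + 2) < 1 := by
  rw [sum_expOneTail_add_two]
  have htail := expOneTail_le (n := m + 2) (by omega)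
  have hfact : ((m + 2)! : ℝ) = (m + 2) * (m + 1)! := by
    push_cast [factorial_succ (m + 1)]; ring
  suffices h : (m : ℝ) * expOneTail (m + 2) < 1 / (m + 1)! by linarith
  calc (m : ℝ) * expOneTail (m + 2)
      ≤ m * ((m + 2 + 1) / ((m + 2)! * (m + 2))) := by
        push_cast at htail
        gcongr
    _ = m * (m + 3) / (m + 2) ^ 2 * (1 / (m + 1)!) := by
        rw [hfact]; field_simp; ring
    _ < 1 * (1 / (m + 1)!) := by
        gcongr
        rw [div_lt_one (by positivity)]
        nlinarith
    _ = 1 / (m + 1)! := one_mul _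

lemma pow_div_factorial_le_pow_div_factorial {x : ℝ} {j k : ℕ} (hjk : j ≤ k) (hkx : (k : ℝ) ≤ x) :
    x ^ j / j ! ≤ x ^ k / k ! := by
  induction k, hjk using Nat.le_induction with
  | base => rfl
  | succ k hjk ih =>
    push_cast at hkx
    have hx : 0 ≤ x := by linarith [(k.cast_nonneg : (0 : ℝ) ≤ k)]
    calc x ^ j / j ! ≤ x ^ k / k ! := ih (by linarith)
      _ ≤ x ^ k / k ! * (x / (k + 1)) := by
        apply le_mul_of_one_le_right (by positivity)
        rw [one_le_div (by positivity)]
        exact hkx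
      _ = x ^ (k + 1) / (k + 1)! := by
        push_cast [factorial_succ, pow_succ]
        field_simp

lemma add_pow_div_factorial {K : Type*} [Field K] [CharZero K] (x y : K) (k : ℕ) :
    (x + y) ^ k / k ! = ∑ j ∈ range (k + 1), x ^ j / j ! * (y ^ (k - j) / (k - j)!) := by
  rw [add_pow, sum_div]
  refine sum_congr rfl fun j hj => ?_
  have hk : (k ! : K) ≠ 0 := Nat.cast_ne_zero.mpr (factorial_ne_zero k)
  rw [Nat.cast_choose K (Nat.lt_succ_iff.mp (mem_range.mp hj))]
  field_simp

lemma sum_range_add_pow_div_factorial {K : Type*} [Field K] [CharZero K] (x y : K) (n : ℕ) :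
    ∑ k ∈ range n, (x + y) ^ k / k ! =
      ∑ j ∈ range n, x ^ j / j ! * ∑ i ∈ range (n - j), y ^ i / i ! := by
  simp_rw [add_pow_div_factorial, mul_sum]
  exact sum_range_diag_flip n fun j i => x ^ j / j ! * (y ^ i / i !)

lemma sum_pow_div_factorial_mul_expOneTail_lt (m : ℕ) :
    ∑ j ∈ range m, (m : ℝ) ^ j / j ! * expOneTail (m + 1 - j) < (m : ℝ) ^ m / m ! := by
  have hpos : (0 : ℝ) < m ^ m / m ! := by
    have := pow_div_factorial_le_pow_div_factorial (x := m) (Nat.zero_le m) le_rfl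
    simp only [pow_zero, factorial_zero, cast_one, div_one] at this
    linarith
  rw [← sum_range_reflect]
  calc ∑ r ∈ range m, (m : ℝ) ^ (m - 1 - r) / (m - 1 - r)! * expOneTail (m + 1 - (m - 1 - r))
      = ∑ r ∈ range m, (m : ℝ) ^ (m - 1 - r) / (m - 1 - r)! * expOneTail (r + 2) := by
        refine sum_congr rfl fun r hr => ?_
        rw [show m + 1 - (m - 1 - r) = r + 2 by have := mem_range.mp hr; omega]
    _ ≤ ∑ r ∈ range m, (m : ℝ) ^ m / m ! * expOneTail (r + 2) := by
        refine sum_le_sum fun r _ => mul_le_mul_of_nonneg_right ?_ (expOneTail_pos _).le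
        exact pow_div_factorial_le_pow_div_factorial (by omega) le_rfl
    _ = (m : ℝ) ^ m / m ! * ∑ r ∈ range m, expOneTail (r + 2) := (mul_sum ..).symm
    _ < (m : ℝ) ^ m / m ! * 1 :=
        mul_lt_mul_of_pos_left (sum_expOneTail_add_two_lt_one m) hpos
    _ = (m : ℝ) ^ m / m ! := mul_one _

theorem stmt7_general (m : ℕ) :
    ∑ k ∈ Finset.range m,
        (Real.exp 1 * (m : ℝ) ^ k / (Nat.factorial k) -
          ((m : ℝ) + 1) ^ k / (Nat.factorial k)) <
      ((m : ℝ) + 1) ^ m / (Nat.factorial m) := by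
  have hpartial (n : ℕ) : ∑ i ∈ range n, (1 : ℝ) ^ i / i ! = Real.exp 1 - expOneTail n := by
    simp [expOneTail]
  have hcauchy : ∑ k ∈ range (m + 1), ((m : ℝ) + 1) ^ k / k ! =
      ∑ j ∈ range m, (m : ℝ) ^ j / j ! * (Real.exp 1 - expOneTail (m + 1 - j)) +
        (m : ℝ) ^ m / m ! := by
    rw [sum_range_add_pow_div_factorial, sum_range_succ _ m, Nat.add_sub_cancel_left,
      sum_range_one]
    simp_rw [hpartial]
    simp
  have hkey := sum_pow_div_factorial_mul_expOneTail_lt m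
  rw [sum_range_succ] at hcauchy
  simp only [mul_sub, sum_sub_distrib, mul_div_assoc, ← mul_sum, ← sum_mul] at hcauchy hkey ⊢
  linarith

theorem stmt7 (m : ℕ) (hm : 1 ≤ m) :
    ∑ k ∈ Finset.range m,
        (Real.exp 1 * (m : ℝ) ^ k / (Nat.factorial k) -
          ((m : ℝ) + 1) ^ k / (Nat.factorial k)) <
      ((m : ℝ) + 1) ^ m / (Nat.factorial m) :=
  stmt7_general m
end

section
/- For real 0 < r < 1 and integers m ≥ 1, n ≥ 1 with r = m/n and r' = (m+1)/n < 1: (m+1)·∑_{i≥1} r'^i/(i+1) − m·∑_{i≥1} r^i/(i+1) ≤ (r(1+r') + r')/(2(1−r')). -/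
/-!
Since `m + 1 = n r'` and `m = n r`, the left-hand side is `n (F r' - F r)` with
`F x = ∑ x ^ k / k` over `k ≥ 2`. Termwise, `(r' ^ k - r ^ k) / k` is bounded by the trapezoidal
rule for the convex function `x ↦ x ^ (k - 1)`, i.e. by `(r' - r) (r' ^ (k-1) + r ^ (k-1)) / 2`,
and `n (r' - r) = 1`. Summing the geometric series leaves `(r' / (1 - r') + r / (1 - r)) / 2`,
which is at most the claimed bound because `r ≤ r'`.
-/

open Finset

lemma pow_mul_pow_add_pow_mul_pow_le {a b : ℝ} (hb : 0 ≤ b) (hab : b ≤ a) (p q : ℕ) :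
    a ^ p * b ^ q + a ^ q * b ^ p ≤ a ^ (p + q) + b ^ (p + q) := by
  have : 0 ≤ (a ^ p - b ^ p) * (a ^ q - b ^ q) :=
    mul_nonneg (sub_nonneg.2 (pow_le_pow_left₀ hb hab p)) (sub_nonneg.2 (pow_le_pow_left₀ hb hab q))
  rw [pow_add, pow_add]
  linarith

lemma sum_antidiagonal_pow_mul_pow_mul_sub (a b : ℝ) (k : ℕ) :
    (∑ ij ∈ antidiagonal k, a ^ ij.1 * b ^ ij.2) * (a - b) = a ^ (k + 1) - b ^ (k + 1) := by
  rw [Nat.sum_antidiagonal_eq_sum_range_succ (fun i j => a ^ i * b ^ j), ← geom_sum₂_mul]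
  simp only [Nat.succ_eq_add_one, Nat.add_sub_cancel]

lemma two_mul_sum_antidiagonal_pow_mul_pow_le {a b : ℝ} (hb : 0 ≤ b) (hab : b ≤ a) (k : ℕ) :
    2 * ∑ ij ∈ antidiagonal k, a ^ ij.1 * b ^ ij.2 ≤ (k + 1) * (a ^ k + b ^ k) := by
  calc 2 * ∑ ij ∈ antidiagonal k, a ^ ij.1 * b ^ ij.2
      = ∑ ij ∈ antidiagonal k, (a ^ ij.1 * b ^ ij.2 + a ^ ij.2 * b ^ ij.1) := by
        rw [sum_add_distrib, ← Nat.sum_antidiagonal_swap (f := fun ij => a ^ ij.1 * b ^ ij.2)]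
        simp only [Prod.fst_swap, Prod.snd_swap]
        ring
    _ ≤ ∑ _ij ∈ antidiagonal k, (a ^ k + b ^ k) := by
        refine sum_le_sum fun ij hij => ?_
        rw [← mem_antidiagonal.1 hij]
        exact pow_mul_pow_add_pow_mul_pow_le hb hab _ _
    _ = (k + 1) * (a ^ k + b ^ k) := by
        rw [sum_const, Nat.card_antidiagonal, nsmul_eq_mul]
        push_cast
        ring

lemma pow_succ_sub_pow_succ_le {a b : ℝ} (hb : 0 ≤ b) (hab : b ≤ a) (k : ℕ) :
    a ^ (k + 1) - b ^ (k + 1) ≤ (k + 1) * (a - b) * (a ^ k + b ^ k) / 2 := by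
  rw [← sum_antidiagonal_pow_mul_pow_mul_sub]
  nlinarith [two_mul_sum_antidiagonal_pow_mul_pow_le hb hab k, sub_nonneg.2 hab]

lemma hasSum_pow_succ {x : ℝ} (hx₀ : 0 ≤ x) (hx₁ : x < 1) :
    HasSum (fun i : ℕ => x ^ (i + 1)) (x / (1 - x)) := by
  simpa only [pow_succ', div_eq_mul_inv] using (hasSum_geometric_of_lt_one hx₀ hx₁).mul_left x

lemma summable_pow_add_two_div {x : ℝ} (hx₀ : 0 ≤ x) (hx₁ : x < 1) :
    Summable (fun i : ℕ => x ^ (i + 2) / ((i : ℝ) + 2)) := by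
  have hlog := Real.hasSum_pow_div_log_of_abs_lt_one (abs_lt.2 ⟨by linarith, hx₁⟩)
  refine ((summable_nat_add_iff 1).2 hlog.summable).congr fun i => ?_
  push_cast
  ring

lemma tsum_pow_add_two_div_sub_le {a b : ℝ} (hb : 0 ≤ b) (hab : b ≤ a) (ha : a < 1) :
    ∑' i : ℕ, a ^ (i + 2) / ((i : ℝ) + 2) - ∑' i : ℕ, b ^ (i + 2) / ((i : ℝ) + 2) ≤
      (a - b) * ((a / (1 - a) + b / (1 - b)) / 2) := by
  have hterm (i : ℕ) : a ^ (i + 2) / ((i : ℝ) + 2) - b ^ (i + 2) / ((i : ℝ) + 2) ≤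
      (a - b) * ((a ^ (i + 1) + b ^ (i + 1)) / 2) := by
    have h := pow_succ_sub_pow_succ_le hb hab (i + 1)
    push_cast at h
    rw [← sub_div, div_le_iff₀ (by positivity)]
    linarith
  have hb₁ : b < 1 := hab.trans_lt ha
  exact hasSum_le hterm
    ((summable_pow_add_two_div (hb.trans hab) ha).hasSum.sub (summable_pow_add_two_div hb hb₁).hasSum)
    ((((hasSum_pow_succ (hb.trans hab) ha).add (hasSum_pow_succ hb hb₁)).div_const 2).mul_left (a - b))

lemma div_one_sub_add_div_one_sub_le {r r' : ℝ} (hr : 0 ≤ r) (hrr' : r ≤ r') (hr' : r' < 1) :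
    (r' / (1 - r') + r / (1 - r)) / 2 ≤ (r * (1 + r') + r') / (2 * (1 - r')) := by
  have h : r / (1 - r) ≤ r * (1 + r') / (1 - r') :=
    calc r / (1 - r) ≤ r / (1 - r') := by gcongr
      _ ≤ r * (1 + r') / (1 - r') := by gcongr; nlinarith
  rw [mul_comm 2, ← div_div, add_div _ r']
  linarith

theorem stmt15_general (m n : ℕ) (hn : 1 ≤ n) (r r' : ℝ)
    (hr : r = (m : ℝ) / n) (hr' : r' = ((m : ℝ) + 1) / n)
    (h0 : 0 < r) (h1' : r' < 1) :
    ((m : ℝ) + 1) * ∑' i : ℕ, r' ^ (i + 1) / ((i : ℝ) + 2) -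
        (m : ℝ) * ∑' i : ℕ, r ^ (i + 1) / ((i : ℝ) + 2) ≤
      (r * (1 + r') + r') / (2 * (1 - r')) := by
  have hn₀ : (n : ℝ) ≠ 0 := Nat.cast_ne_zero.2 (Nat.one_le_iff_ne_zero.1 hn)
  have hm : (m : ℝ) = n * r := by rw [hr]; field_simp
  have hm₁ : (m : ℝ) + 1 = n * r' := by rw [hr']; field_simp
  have hrr' : r ≤ r' := by rw [hr, hr']; gcongr; linarith
  have hstep : (n : ℝ) * (r' - r) = 1 := by rw [mul_sub, ← hm, ← hm₁]; ring
  have hshift (x : ℝ) : x * ∑' i : ℕ, x ^ (i + 1) / ((i : ℝ) + 2) =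
      ∑' i : ℕ, x ^ (i + 2) / ((i : ℝ) + 2) := by
    rw [← tsum_mul_left]; congr with i; ring
  calc ((m : ℝ) + 1) * ∑' i : ℕ, r' ^ (i + 1) / ((i : ℝ) + 2) -
        (m : ℝ) * ∑' i : ℕ, r ^ (i + 1) / ((i : ℝ) + 2)
      = n * (∑' i : ℕ, r' ^ (i + 2) / ((i : ℝ) + 2) - ∑' i : ℕ, r ^ (i + 2) / ((i : ℝ) + 2)) := by
        rw [hm₁, hm, mul_assoc, mul_assoc, hshift, hshift, mul_sub]
    _ ≤ n * ((r' - r) * ((r' / (1 - r') + r / (1 - r)) / 2)) := by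
        gcongr
        exact tsum_pow_add_two_div_sub_le h0.le hrr' h1'
    _ = (r' / (1 - r') + r / (1 - r)) / 2 := by rw [← mul_assoc, hstep, one_mul]
    _ ≤ (r * (1 + r') + r') / (2 * (1 - r')) := div_one_sub_add_div_one_sub_le h0.le hrr' h1'

theorem stmt15 (m n : ℕ) (hm : 1 ≤ m) (hn : 1 ≤ n) (r r' : ℝ)
    (hr : r = (m : ℝ) / n) (hr' : r' = ((m : ℝ) + 1) / n)
    (h0 : 0 < r) (h1 : r < 1) (h1' : r' < 1) :
    ((m : ℝ) + 1) * ∑' i : ℕ, r' ^ (i + 1) / ((i : ℝ) + 2) -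
        (m : ℝ) * ∑' i : ℕ, r ^ (i + 1) / ((i : ℝ) + 2) ≤
      (r * (1 + r') + r') / (2 * (1 - r')) :=
  stmt15_general m n hn r r' hr hr' h0 h1'
end
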